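/- arXiv:2402.14995 — 5 statements merged into one kernel-verified Lean document; each statement's English description precedes it below -/
import Mathlib

section
/- If U is a unitary operator on a complex Hilbert space H and J₁ is a conjugation on H satisfying J₁ U J₁ = U*, then J₂ := U* ∘ J₁ is a conjugation on H, J₂ U J₂ = U*, and J₁ ∘ J₂ = U. In particular U is a product of two conjugations. -/
open scoped InnerProductSpace

def IsConjugation {H : Type*} [NormedAddCommGroup H] [InnerProductSpace ℂ H]
    (C : H → H) : Prop :=
  (∀ (x y : H) (a : ℂ), C (x + a • y) = C x + (starRingEnd ℂ) a • C y) ∧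
  (∀ x : H, ‖C x‖ = ‖x‖) ∧
  (∀ x : H, C (C x) = x)

theorem unitary_is_product_of_two_conjugations
    {H : Type*} [NormedAddCommGroup H] [InnerProductSpace ℂ H] [CompleteSpace H]
    (U : H →L[ℂ] H)
    (hU₁ : ContinuousLinearMap.adjoint U ∘L U = 1)
    (hU₂ : U ∘L ContinuousLinearMap.adjoint U = 1)
    (J₁ : H → H) (hJ₁ : IsConjugation J₁)
    (hsym : ∀ x, J₁ (U (J₁ x)) = ContinuousLinearMap.adjoint U x) :
    IsConjugation (fun x => ContinuousLinearMap.adjoint U (J₁ x)) ∧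
    (∀ x, ContinuousLinearMap.adjoint U (J₁ (U (ContinuousLinearMap.adjoint U (J₁ x)))) =
      ContinuousLinearMap.adjoint U x) ∧
    (∀ x, J₁ (ContinuousLinearMap.adjoint U (J₁ x)) = U x) := by
  obtain ⟨hadd, hnorm, hinv⟩ := hJ₁
  have hUU : ∀ x, ContinuousLinearMap.adjoint U (U x) = x := fun x =>
    congrFun (congrArg (fun f => f.toFun) hU₁) x
  have hUU' : ∀ x, U (ContinuousLinearMap.adjoint U x) = x := fun x =>
    congrFun (congrArg (fun f => f.toFun) hU₂) x
  have key : ∀ x, ContinuousLinearMap.adjoint U (J₁ x) = J₁ (U x) := by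
    intro x
    have := hsym (J₁ x)
    rw [hinv] at this
    exact this.symm
  have hUnorm : ∀ x : H, ‖U x‖ = ‖x‖ := by
    intro x
    have h : ⟪U x, U x⟫_ℂ = ⟪x, x⟫_ℂ := by
      calc ⟪U x, U x⟫_ℂ = ⟪x, ContinuousLinearMap.adjoint U (U x)⟫_ℂ :=
            (ContinuousLinearMap.adjoint_inner_right U _ _).symm
        _ = ⟪x, x⟫_ℂ := by rw [hUU]
    rw [inner_self_eq_norm_sq_to_K, inner_self_eq_norm_sq_to_K] at h
    have h3 : ‖U x‖ ^ 2 = ‖x‖ ^ 2 := by exact_mod_cast h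
    nlinarith [norm_nonneg (U x), norm_nonneg x]
  refine ⟨⟨?_, ?_, ?_⟩, ?_, ?_⟩
  · intro x y a
    simp only [hadd, map_add, map_smul]
  · intro x
    show ‖ContinuousLinearMap.adjoint U (J₁ x)‖ = ‖x‖
    rw [key, hnorm, hUnorm]
  · intro x
    show ContinuousLinearMap.adjoint U (J₁ (ContinuousLinearMap.adjoint U (J₁ x))) = x
    rw [key x, hinv, hUU]
  · intro x
    rw [hUU', hinv]

  · intro x
    rw [key, hinv]
end

section
/- Let H be a separable complex Hilbert space with orthonormal basis B = (uⱼ), and let J_B be the conjugation fixing each uⱼ (extended antilinearly). Then a map C on H is a conjugation if and only if C = V ∘ J_B for a unitary operator V on H whose matrix with respect to B is symmetric, i.e. ⟪V uₘ, uₙ⟫ = ⟪V uₙ, uₘ⟫ for all m, n. -/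
open scoped ComplexConjugate

section Aux

variable {H : Type*} [NormedAddCommGroup H] [InnerProductSpace ℂ H] {C : H → H}

local notation "⟪" x ", " y "⟫" => @inner ℂ _ _ x y

lemma IsConjugation.add (hC : IsConjugation C) (x y : H) :
    C (x + y) = C x + C y := by simpa using hC.1 x y 1

lemma IsConjugation.zero (hC : IsConjugation C) : C 0 = 0 := by
  have h : C 0 = C 0 + C 0 := by simpa using (hC.add 0 0).symm
  exact (left_eq_add.mp h)

lemma IsConjugation.smul (hC : IsConjugation C) (a : ℂ) (x : H) :
    C (a • x) = conj a • C x := by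
  have h := hC.1 0 x a
  rwa [zero_add, hC.zero, zero_add] at h

lemma IsConjugation.sub (hC : IsConjugation C) (x y : H) :
    C (x - y) = C x - C y := by
  have h := hC.1 x y (-1)
  simpa [sub_eq_add_neg] using h

lemma IsConjugation.inner_map (hC : IsConjugation C) (x y : H) :
    ⟪C x, C y⟫ = ⟪y, x⟫ := by
  have e1 : ‖C x + C y‖ = ‖x + y‖ := by rw [← hC.add, hC.2.1]
  have e2 : ‖C x - C y‖ = ‖x - y‖ := by rw [← hC.sub, hC.2.1]
  have e3 : ‖C x - Complex.I • C y‖ = ‖x + Complex.I • y‖ := by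
    have h := hC.1 x y Complex.I
    rw [Complex.conj_I, neg_smul, ← sub_eq_add_neg] at h
    rw [← h, hC.2.1]
  have e4 : ‖C x + Complex.I • C y‖ = ‖x - Complex.I • y‖ := by
    have h := hC.1 x y (-Complex.I)
    simp only [map_neg, Complex.conj_I, neg_neg] at h
    rw [show x + -Complex.I • y = x - Complex.I • y by rw [neg_smul, ← sub_eq_add_neg]] at h
    rw [← h, hC.2.1]
  have n1 : ‖y - Complex.I • x‖ = ‖x + Complex.I • y‖ := by
    have : Complex.I • (y - Complex.I • x) = x + Complex.I • y := by
      rw [smul_sub, smul_smul, Complex.I_mul_I, neg_one_smul, sub_neg_eq_add, add_comm]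
    calc ‖y - Complex.I • x‖ = ‖Complex.I • (y - Complex.I • x)‖ := by
          rw [norm_smul, Complex.norm_I, one_mul]
      _ = ‖x + Complex.I • y‖ := by rw [this]
  have n2 : ‖y + Complex.I • x‖ = ‖x - Complex.I • y‖ := by
    have : Complex.I • (x - Complex.I • y) = y + Complex.I • x := by
      rw [smul_sub, smul_smul, Complex.I_mul_I, neg_one_smul, sub_neg_eq_add, add_comm]
    calc ‖y + Complex.I • x‖ = ‖Complex.I • (x - Complex.I • y)‖ := by rw [this]
      _ = ‖x - Complex.I • y‖ := by rw [norm_smul, Complex.norm_I, one_mul]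
  rw [inner_eq_sum_norm_sq_div_four, inner_eq_sum_norm_sq_div_four]
  simp only [RCLike.I_to_complex] at *
  rw [e1, e2, e3, e4, n1, n2, show ‖y + x‖ = ‖x + y‖ by rw [add_comm],
    norm_sub_rev y x]

lemma IsConjugation.inner_symm (hC : IsConjugation C) (x y : H) :
    ⟪C x, y⟫ = ⟪C y, x⟫ := by
  conv_lhs => rw [← hC.2.2 y, hC.inner_map]

end Aux

theorem conjugation_iff_symmetric_unitary_times_basis_conjugation
    {H : Type*} [NormedAddCommGroup H] [InnerProductSpace ℂ H] [CompleteSpace H]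
    {ι : Type*} [Countable ι] (B : HilbertBasis ι ℂ H)
    (J : H → H) (hJ : IsConjugation J) (hJfix : ∀ i, J (B i) = B i)
    (C : H → H) :
    IsConjugation C ↔
      ∃ V : H →L[ℂ] H,
        (ContinuousLinearMap.adjoint V ∘L V = 1 ∧
          V ∘L ContinuousLinearMap.adjoint V = 1) ∧
        (∀ m n : ι, (inner ℂ (V (B m)) (B n) : ℂ) = inner ℂ (V (B n)) (B m)) ∧
        (∀ x, C x = V (J x)) := by
  constructor
  · intro hC
    -- V = C ∘ J
    let Vlin : H →ₗ[ℂ] H :=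
      { toFun := fun x => C (J x)
        map_add' := fun x y => by show C (J (x + y)) = C (J x) + C (J y); rw [hJ.add, hC.add]
        map_smul' := fun a x => by
          show C (J (a • x)) = a • C (J x)
          rw [hJ.smul, hC.smul, Complex.conj_conj] }
    let V : H →L[ℂ] H := Vlin.mkContinuous 1 (fun x => by
      simp only [Vlin, LinearMap.coe_mk, AddHom.coe_mk, one_mul]
      rw [hC.2.1, hJ.2.1])
    let Wlin : H →ₗ[ℂ] H :=
      { toFun := fun x => J (C x)
        map_add' := fun x y => by show J (C (x + y)) = J (C x) + J (C y); rw [hC.add, hJ.add]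
        map_smul' := fun a x => by
          show J (C (a • x)) = a • J (C x)
          rw [hC.smul, hJ.smul, Complex.conj_conj] }
    let W : H →L[ℂ] H := Wlin.mkContinuous 1 (fun x => by
      simp only [Wlin, LinearMap.coe_mk, AddHom.coe_mk, one_mul]
      rw [hJ.2.1, hC.2.1])
    have hVapp : ∀ x, V x = C (J x) := fun _ => rfl
    have hWapp : ∀ x, W x = J (C x) := fun _ => rfl
    have hadj : W = ContinuousLinearMap.adjoint V := by
      rw [ContinuousLinearMap.eq_adjoint_iff]
      intro x y
      rw [hWapp, hVapp]
      calc (inner ℂ (J (C x)) y : ℂ) = inner ℂ (J y) (C x) := hJ.inner_symm _ _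
        _ = conj (inner ℂ (C x) (J y) : ℂ) := (inner_conj_symm _ _).symm
        _ = conj (inner ℂ (C (J y)) x : ℂ) := by rw [hC.inner_symm]
        _ = inner ℂ x (C (J y)) := inner_conj_symm _ _
    refine ⟨V, ⟨?_, ?_⟩, ?_, ?_⟩
    · ext x
      simp only [ContinuousLinearMap.comp_apply, ContinuousLinearMap.one_apply, ← hadj]
      rw [hWapp, hVapp, hC.2.2, hJ.2.2]
    · ext x
      simp only [ContinuousLinearMap.comp_apply, ContinuousLinearMap.one_apply, ← hadj]
      rw [hVapp, hWapp, hJ.2.2, hC.2.2]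
    · intro m n
      rw [hVapp, hVapp, hJfix, hJfix, hC.inner_symm]
    · intro x
      rw [hVapp, hJ.2.2]
  · rintro ⟨V, ⟨hV1, hV2⟩, hsym, hCV⟩
    have hVnorm : ∀ z, ‖V z‖ = ‖z‖ := by
      intro z
      have h1 : ContinuousLinearMap.adjoint V (V z) = z := by
        have := congrArg (fun A => A z) hV1
        simpa using this
      have h2 : (inner ℂ (V z) (V z) : ℂ) = inner ℂ z z := by
        rw [← ContinuousLinearMap.adjoint_inner_right, h1]
      rw [inner_self_eq_norm_sq_to_K, inner_self_eq_norm_sq_to_K] at h2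
      have h3 : ‖V z‖ ^ 2 = ‖z‖ ^ 2 := by exact_mod_cast h2
      nlinarith [norm_nonneg (V z), norm_nonneg z]
    -- key : J ∘ V ∘ J = adjoint V
    have hkey : ∀ x, J (V (J x)) = ContinuousLinearMap.adjoint V x := by
      let glin : H →ₗ[ℂ] H :=
        { toFun := fun x => J (V (J x))
          map_add' := fun x y => by show J (V (J (x + y))) = J (V (J x)) + J (V (J y)); rw [hJ.add, map_add, hJ.add]
          map_smul' := fun a x => by
            show J (V (J (a • x))) = a • J (V (J x))
            rw [hJ.smul, map_smul, hJ.smul, Complex.conj_conj] }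
      have hJcont : Continuous J := by
        have : Isometry J := by
          refine Isometry.of_dist_eq fun x y => ?_
          rw [dist_eq_norm, dist_eq_norm, ← hJ.sub, hJ.2.1]
        exact this.continuous
      have hgcont : Continuous fun x => J (V (J x)) :=
        hJcont.comp (V.continuous.comp hJcont)
      have hbasis : ∀ i, J (V (J (B i))) = ContinuousLinearMap.adjoint V (B i) := by
        intro i
        rw [hJfix]
        apply B.repr.injective
        apply lp.ext
        funext m
        rw [B.repr_apply_apply, B.repr_apply_apply]
        calc (inner ℂ (B m) (J (V (B i))) : ℂ)
            = conj (inner ℂ (J (V (B i))) (B m) : ℂ) := (inner_conj_symm _ _).symm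
          _ = conj (inner ℂ (J (B m)) (V (B i)) : ℂ) := by rw [hJ.inner_symm]
          _ = conj (inner ℂ (B m) (V (B i)) : ℂ) := by rw [hJfix]
          _ = inner ℂ (V (B i)) (B m) := inner_conj_symm _ _
          _ = inner ℂ (V (B m)) (B i) := hsym i m
          _ = inner ℂ (B m) (ContinuousLinearMap.adjoint V (B i)) := by
              rw [ContinuousLinearMap.adjoint_inner_right]
      have hdense : Dense (↑(Submodule.span ℂ (Set.range B)) : Set H) := by
        have h := B.dense_span
        rw [SetLike.ext'_iff, Submodule.topologicalClosure_coe, Submodule.top_coe] at h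
        exact dense_iff_closure_eq.mpr h
      have heq : (fun x => J (V (J x))) = fun x => ContinuousLinearMap.adjoint V x := by
        apply Continuous.ext_on hdense hgcont (ContinuousLinearMap.adjoint V).continuous
        intro x hx
        exact LinearMap.eqOn_span (f := glin)
          (g := (ContinuousLinearMap.adjoint V).toLinearMap)
          (fun y hy => by obtain ⟨i, rfl⟩ := hy; exact hbasis i) hx
      exact fun x => congrFun heq x
    refine ⟨?_, ?_, ?_⟩
    · intro x y a
      rw [hCV, hCV, hCV, hJ.1, map_add, map_smul]
    · intro x
      rw [hCV, hVnorm, hJ.2.1]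
    · intro x
      rw [hCV, hCV x, hkey]
      have := congrArg (fun A => A x) hV2
      simpa using this
end

section
/- Let U be a unitary operator on a separable complex Hilbert space H with orthonormal basis B, and J_B the conjugation fixing the basis. Then a conjugation C satisfies C U C = U* if and only if C = V ∘ J_B for a unitary V on H such that the matrix [V]_B is symmetric and [V]_B [U]_Bᵗ = [U]_B [V]_B. -/
/-- The matrix entry `([A]_B)ₘₙ = ⟨A uₙ, uₘ⟩` of a bounded operator with respect to an
orthonormal basis `B` (written with Mathlib's inner ℂ product, conjugate-linear in the
first slot). -/
noncomputable def matrixEntry {H : Type*} [NormedAddCommGroup H] [InnerProductSpace ℂ H]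
    {ι : Type*} (B : HilbertBasis ι ℂ H) (A : H →L[ℂ] H) (m n : ι) : ℂ :=
  inner ℂ (B m) (A (B n))

open scoped ComplexConjugate

namespace IsConjugation

variable {H : Type*} [NormedAddCommGroup H] [InnerProductSpace ℂ H] {C : H → H}

theorem add' (hC : IsConjugation C) (x y : H) : C (x + y) = C x + C y := by
  have := hC.1 x y 1; simpa using this

theorem zero' (hC : IsConjugation C) : C 0 = 0 := by
  have h := hC.add' 0 0
  rw [add_zero] at h
  exact (left_eq_add.mp h)

theorem smul' (hC : IsConjugation C) (a : ℂ) (x : H) : C (a • x) = conj a • C x := by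
  have := hC.1 0 x a
  simpa [hC.zero'] using this

theorem neg' (hC : IsConjugation C) (x : H) : C (-x) = -C x := by
  have := hC.smul' (-1) x
  simpa using this

theorem sub' (hC : IsConjugation C) (x y : H) : C (x - y) = C x - C y := by
  rw [sub_eq_add_neg, hC.add', hC.neg', ← sub_eq_add_neg]

theorem isometry (hC : IsConjugation C) : Isometry C := by
  refine Isometry.of_dist_eq fun x y => ?_
  rw [dist_eq_norm, dist_eq_norm, ← hC.sub', hC.2.1]

theorem inner_map_map (hC : IsConjugation C) (x y : H) :
    (inner ℂ (C x) (C y) : ℂ) = inner ℂ y x := by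
  have hI : (RCLike.I : ℂ) = Complex.I := rfl
  rw [inner_eq_sum_norm_sq_div_four (𝕜 := ℂ) (C x) (C y),
    inner_eq_sum_norm_sq_div_four (𝕜 := ℂ) y x]
  have h1 : ‖C x + C y‖ = ‖y + x‖ := by
    rw [← hC.add', hC.2.1, add_comm]
  have h2 : ‖C x - C y‖ = ‖y - x‖ := by
    rw [← hC.sub', hC.2.1, norm_sub_rev]
  have h3 : ‖C x - (RCLike.I : ℂ) • C y‖ = ‖y - (RCLike.I : ℂ) • x‖ := by
    rw [hI]
    have : C x - Complex.I • C y = C (x + Complex.I • y) := by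
      rw [hC.add', hC.smul']
      simp [Complex.conj_I, sub_eq_add_neg]
    rw [this, hC.2.1]
    have : x + Complex.I • y = Complex.I • (y - Complex.I • x) := by
      rw [smul_sub, smul_smul, Complex.I_mul_I]
      simp [add_comm]
    rw [this, norm_smul]
    simp
  have h4 : ‖C x + (RCLike.I : ℂ) • C y‖ = ‖y + (RCLike.I : ℂ) • x‖ := by
    rw [hI]
    have : C x + Complex.I • C y = C (x - Complex.I • y) := by
      rw [hC.sub', hC.smul']
      simp [Complex.conj_I, sub_eq_add_neg]
    rw [this, hC.2.1]
    have : x - Complex.I • y = (-Complex.I) • (y + Complex.I • x) := by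
      rw [smul_add, smul_smul]
      simp [Complex.I_mul_I, sub_eq_add_neg, add_comm]
    rw [this, norm_smul]
    simp
  rw [h1, h2, h3, h4]

end IsConjugation

/-- Two vectors are equal if they pair equally against every Hilbert basis vector. -/
theorem HilbertBasis.eq_of_inner_eq {H : Type*} [NormedAddCommGroup H]
    [InnerProductSpace ℂ H] [CompleteSpace H] {ι : Type*}
    (B : HilbertBasis ι ℂ H) {a b : H}
    (h : ∀ i, (inner ℂ (B i) a : ℂ) = inner ℂ (B i) b) : a = b := by
  apply B.repr.injective
  ext i
  rw [B.repr_apply_apply, B.repr_apply_apply]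
  exact h i

theorem Csymmetric_iff_matrix_conditions
    {H : Type*} [NormedAddCommGroup H] [InnerProductSpace ℂ H] [CompleteSpace H]
    {ι : Type*} [Countable ι] (B : HilbertBasis ι ℂ H)
    (J : H → H) (hJ : IsConjugation J) (hJfix : ∀ i, J (B i) = B i)
    (U : H →L[ℂ] H)
    (hU₁ : ContinuousLinearMap.adjoint U ∘L U = 1)
    (hU₂ : U ∘L ContinuousLinearMap.adjoint U = 1)
    (C : H → H) (hC : IsConjugation C) :
    (∀ x, C (U (C x)) = ContinuousLinearMap.adjoint U x) ↔
      ∃ V : H →L[ℂ] H,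
        (ContinuousLinearMap.adjoint V ∘L V = 1 ∧
          V ∘L ContinuousLinearMap.adjoint V = 1) ∧
        (∀ m n : ι, matrixEntry B V m n = matrixEntry B V n m) ∧
        (∀ m n : ι, (∑' k : ι, matrixEntry B V m k * matrixEntry B U n k) =
          ∑' k : ι, matrixEntry B U m k * matrixEntry B V k n) ∧
        (∀ x, C x = V (J x)) := by
  have key : ∀ (y : H) (k : ι), (inner ℂ (B k) (J y) : ℂ) = inner ℂ y (B k) := by
    intro y k
    conv_lhs => rw [← hJfix k]
    rw [hJ.inner_map_map]
  constructor
  · intro h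
    -- forward direction: build V = C ∘ J
    have hCU : ∀ x, C ((ContinuousLinearMap.adjoint U) x) = U (C x) := by
      intro x
      have := congrArg C (h x)
      rw [hC.2.2] at this
      exact this.symm
    let V₀ : H →ₗ[ℂ] H :=
      { toFun := fun x => C (J x)
        map_add' := fun x y => by
          show C (J (x + y)) = C (J x) + C (J y)
          rw [hJ.add', hC.add']
        map_smul' := fun a x => by
          show C (J (a • x)) = (RingHom.id ℂ) a • C (J x)
          rw [hJ.smul', hC.smul']
          simp }
    let V : H →L[ℂ] H := V₀.mkContinuous 1 (fun x => by
      simp only [V₀, LinearMap.coe_mk, AddHom.coe_mk, one_mul]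
      rw [hC.2.1, hJ.2.1])
    have hVapp : ∀ x, V x = C (J x) := fun x => rfl
    have hVJ : ∀ x, V (J x) = C x := fun x => by rw [hVapp, hJ.2.2]
    have hVinner : ∀ x y, (inner ℂ (V x) (V y) : ℂ) = inner ℂ x y := by
      intro x y
      rw [hVapp, hVapp, hC.inner_map_map, hJ.inner_map_map]
    have hVV : ContinuousLinearMap.adjoint V ∘L V = 1 := by
      ext y
      apply ext_inner_left ℂ
      intro v
      rw [ContinuousLinearMap.comp_apply, ContinuousLinearMap.adjoint_inner_right, hVinner]
      rfl
    have hVsurj : ∀ y, V (J (C y)) = y := fun y => by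
      rw [hVapp, hJ.2.2, hC.2.2]
    have hVV' : V ∘L ContinuousLinearMap.adjoint V = 1 := by
      ext y
      rw [ContinuousLinearMap.comp_apply, ← hVsurj y]
      have := congrArg (fun A : H →L[ℂ] H => V (A (J (C y)))) hVV
      simpa using this
    refine ⟨V, ⟨hVV, hVV'⟩, ?_, ?_, fun x => (hVJ x).symm⟩
    · intro m n
      unfold matrixEntry
      rw [hVapp, hVapp, hJfix, hJfix]
      have := hC.inner_map_map (C (B m)) (B n)
      rwa [hC.2.2] at this
    · intro m n
      have hkeyV : V (J ((ContinuousLinearMap.adjoint U) (B n))) = U (V (B n)) := by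
        rw [hVJ, hCU, hVapp, hJfix]
      calc ∑' k, matrixEntry B V m k * matrixEntry B U n k
          = ∑' k, (inner ℂ ((ContinuousLinearMap.adjoint V) (B m)) (B k) : ℂ) *
              inner ℂ (B k) (J ((ContinuousLinearMap.adjoint U) (B n))) := by
            congr 1
            funext k
            unfold matrixEntry
            rw [ContinuousLinearMap.adjoint_inner_left, key,
              ContinuousLinearMap.adjoint_inner_left]
        _ = inner ℂ ((ContinuousLinearMap.adjoint V) (B m))
              (J ((ContinuousLinearMap.adjoint U) (B n))) := B.tsum_inner_mul_inner _ _
        _ = inner ℂ (B m) (V (J ((ContinuousLinearMap.adjoint U) (B n)))) := by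
            rw [ContinuousLinearMap.adjoint_inner_left]
        _ = inner ℂ (B m) (U (V (B n))) := by rw [hkeyV]
        _ = inner ℂ ((ContinuousLinearMap.adjoint U) (B m)) (V (B n)) := by
            rw [ContinuousLinearMap.adjoint_inner_left]
        _ = ∑' k, (inner ℂ ((ContinuousLinearMap.adjoint U) (B m)) (B k) : ℂ) *
              inner ℂ (B k) (V (B n)) := (B.tsum_inner_mul_inner _ _).symm
        _ = ∑' k, matrixEntry B U m k * matrixEntry B V k n := by
            congr 1
            funext k
            unfold matrixEntry
            rw [ContinuousLinearMap.adjoint_inner_left]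
  · rintro ⟨V, ⟨hVV, hVV'⟩, hsym, hmat, hCV⟩
    -- step 1: the claim on basis vectors
    have hbasis : ∀ n, C ((ContinuousLinearMap.adjoint U) (B n)) = U (C (B n)) := by
      intro n
      rw [hCV, hCV, hJfix]
      apply B.eq_of_inner_eq
      intro m
      calc (inner ℂ (B m) (V (J ((ContinuousLinearMap.adjoint U) (B n)))) : ℂ)
          = inner ℂ ((ContinuousLinearMap.adjoint V) (B m))
              (J ((ContinuousLinearMap.adjoint U) (B n))) := by
            rw [ContinuousLinearMap.adjoint_inner_left]
        _ = ∑' k, (inner ℂ ((ContinuousLinearMap.adjoint V) (B m)) (B k) : ℂ) *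
              inner ℂ (B k) (J ((ContinuousLinearMap.adjoint U) (B n))) :=
            (B.tsum_inner_mul_inner _ _).symm
        _ = ∑' k, matrixEntry B V m k * matrixEntry B U n k := by
            congr 1
            funext k
            unfold matrixEntry
            rw [ContinuousLinearMap.adjoint_inner_left, key,
              ContinuousLinearMap.adjoint_inner_left]
        _ = ∑' k, matrixEntry B U m k * matrixEntry B V k n := hmat m n
        _ = ∑' k, (inner ℂ ((ContinuousLinearMap.adjoint U) (B m)) (B k) : ℂ) *
              inner ℂ (B k) (V (B n)) := by
            congr 1
            funext k
            unfold matrixEntry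
            rw [ContinuousLinearMap.adjoint_inner_left]
        _ = inner ℂ ((ContinuousLinearMap.adjoint U) (B m)) (V (B n)) :=
            B.tsum_inner_mul_inner _ _
        _ = inner ℂ (B m) (U (V (B n))) := by
            rw [ContinuousLinearMap.adjoint_inner_left]
    -- step 2: extend to all x by density
    have hall : ∀ x, C ((ContinuousLinearMap.adjoint U) x) = U (C x) := by
      set U' := ContinuousLinearMap.adjoint U with hU'
      have hclosed : IsClosed {x : H | C (U' x) = U (C x)} :=
        isClosed_eq (hC.isometry.continuous.comp U'.continuous)
          (U.continuous.comp hC.isometry.continuous)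
      have hspan : (Submodule.span ℂ (Set.range ⇑B) : Set H) ⊆ {x : H | C (U' x) = U (C x)} := by
        intro x hx
        induction hx using Submodule.span_induction with
        | mem x hx =>
            obtain ⟨i, rfl⟩ := hx
            exact hbasis i
        | zero => simp [hC.zero']
        | add x y _ _ hx hy =>
            simp only [Set.mem_setOf_eq] at hx hy ⊢
            rw [map_add, hC.add', hx, hy, hC.add', map_add]
        | smul a x _ hx =>
            simp only [Set.mem_setOf_eq] at hx ⊢
            rw [map_smul, hC.smul', hx, hC.smul', map_smul]
      intro x
      have hx : x ∈ closure (Submodule.span ℂ (Set.range ⇑B) : Set H) := by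
        have := B.dense_span
        have : x ∈ (Submodule.span ℂ (Set.range ⇑B)).topologicalClosure := by
          rw [this]; trivial
        exact this
      exact (closure_minimal hspan hclosed) hx
    intro x
    have := congrArg C (hall x)
    rw [hC.2.2] at this
    exact this.symm
end

section
/- Let U be an n × n unitary matrix that is diagonal with distinct eigenvalues ξ₁, …, ξ_d (each ξⱼ appearing with multiplicity nⱼ, in consecutive blocks). Then a conjugation C on ℂⁿ satisfies C U C = U* if and only if C = (V₁ ⊕ V₂ ⊕ ⋯ ⊕ V_d) ∘ J, where each Vⱼ is an nⱼ × nⱼ unitary matrix with Vⱼᵗ = Vⱼ and J is entrywise complex conjugation on ℂⁿ. -/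
open Matrix

theorem conjugation_symmetric_for_diagonal_unitary_matrix
    (n d : ℕ) (nn : Fin d → ℕ) (hn : ∑ j, nn j = n)
    (ξ : Fin d → ℂ) (hmod : ∀ j, ‖ξ j‖ = 1) (hdist : Function.Injective ξ)
    (U : Matrix ((j : Fin d) × Fin (nn j)) ((j : Fin d) × Fin (nn j)) ℂ)
    (hU : U = Matrix.diagonal fun p => ξ p.1)
    (C : EuclideanSpace ℂ ((j : Fin d) × Fin (nn j)) →
      EuclideanSpace ℂ ((j : Fin d) × Fin (nn j)))
    (hC : IsConjugation C) :
    (∀ x, C (WithLp.toLp 2 (U.mulVec (C x))) = Uᴴ.mulVec x) ↔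
      ∃ V : (j : Fin d) → Matrix (Fin (nn j)) (Fin (nn j)) ℂ,
        (∀ j, V j ∈ Matrix.unitaryGroup (Fin (nn j)) ℂ) ∧
        (∀ j, (V j)ᵀ = V j) ∧
        ∀ (x : EuclideanSpace ℂ ((j : Fin d) × Fin (nn j)))
          (p : (j : Fin d) × Fin (nn j)),
          C x p = ∑ k, V p.1 p.2 k * (starRingEnd ℂ) (x ⟨p.1, k⟩) := by
  classical
  obtain ⟨hadd, hnorm, hinv⟩ := hC
  -- basic antilinearity facts
  have hC0 : C 0 = 0 := by
    have h := hadd 0 0 1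
    simpa using h
  have hCadd : ∀ x y, C (x + y) = C x + C y := by
    intro x y
    have h := hadd x y 1
    simpa using h
  have hCsmul : ∀ (a : ℂ) x, C (a • x) = (starRingEnd ℂ) a • C x := by
    intro a x
    have h := hadd 0 x a
    simpa [hC0] using h
  -- basis vectors
  set e : ((j : Fin d) × Fin (nn j)) → EuclideanSpace ℂ ((j : Fin d) × Fin (nn j)) :=
    fun q => EuclideanSpace.single q (1:ℂ) with he
  -- matrix of C
  set M : Matrix ((j : Fin d) × Fin (nn j)) ((j : Fin d) × Fin (nn j)) ℂ :=
    Matrix.of fun p q => C (e q) p with hM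
  have hMdef : ∀ p q, M p q = C (e q) p := fun p q => rfl
  -- representation of C
  have hrepr : ∀ (x : EuclideanSpace ℂ ((j : Fin d) × Fin (nn j))) p,
      C x p = ∑ q, M p q * (starRingEnd ℂ) (x q) := by
    intro x p
    have hx : x = ∑ q, x q • e q := by
      ext i
      rw [WithLp.ofLp_sum, Finset.sum_apply (a := i) (g := fun q => (x q • e q).ofLp)]
      simp [he, EuclideanSpace.single_apply]
    have hCx : C x = ∑ q, (starRingEnd ℂ) (x q) • C (e q) := by
      conv_lhs => rw [hx]
      induction (Finset.univ : Finset ((j : Fin d) × Fin (nn j))) using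
          Finset.induction with
      | empty => simpa using hC0
      | insert _ _ hq ih =>
          rw [Finset.sum_insert hq, Finset.sum_insert hq, hCadd, hCsmul, ih]
    rw [hCx, WithLp.ofLp_sum, Finset.sum_apply (a := p)
      (g := fun q => ((starRingEnd ℂ) (x q) • C (e q)).ofLp)]
    refine Finset.sum_congr rfl fun q _ => ?_
    simp [hMdef, mul_comm]
  -- e evaluated
  have he_app : ∀ (q p : (j : Fin d) × Fin (nn j)),
      e q p = if p = q then (1:ℂ) else 0 := by
    intro q p
    simp [he, EuclideanSpace.single_apply]
  have hCe : ∀ (r p : (j : Fin d) × Fin (nn j)), C (e r) p = M p r := fun r p => rfl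
  -- sums over sigma types
  have hsum : ∀ (f : ((j : Fin d) × Fin (nn j)) → ℂ),
      ∑ q, f q = ∑ j, ∑ k : Fin (nn j), f ⟨j, k⟩ := by
    intro f
    rw [← Finset.univ_sigma_univ, Finset.sum_sigma]
  constructor
  · -- forward direction
    intro h
    -- M * Mbar = 1
    have hM1 : M * M.map (starRingEnd ℂ) = 1 := by
      ext p r
      have h1 : C (C (e r)) p = e r p := by rw [hinv]
      rw [hrepr (C (e r)) p] at h1
      simp only [hCe] at h1
      rw [Matrix.mul_apply]
      simp only [Matrix.map_apply]
      rw [h1, he_app, Matrix.one_apply]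
    -- inner products
    have hinner : ∀ x y : EuclideanSpace ℂ ((j : Fin d) × Fin (nn j)),
        (inner ℂ (C x) (C y) : ℂ) = inner ℂ y x := by
      have hJJ : ∀ x : EuclideanSpace ℂ ((j : Fin d) × Fin (nn j)),
          (fun i => (starRingEnd ℂ) (((starRingEnd ℂ) ∘ x) i))
            = (x : ((j : Fin d) × Fin (nn j)) → ℂ) := by
        intro x; funext i; simp
      let T : EuclideanSpace ℂ ((j : Fin d) × Fin (nn j)) →ₗ[ℂ]
          EuclideanSpace ℂ ((j : Fin d) × Fin (nn j)) :=
        { toFun := fun x => C (WithLp.toLp 2 ((starRingEnd ℂ) ∘ x))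
          map_add' := by
            intro x y
            have hxy : (WithLp.toLp 2 ((starRingEnd ℂ) ∘ WithLp.ofLp (x + y)) :
                EuclideanSpace ℂ ((j : Fin d) × Fin (nn j)))
                = WithLp.toLp 2 ((starRingEnd ℂ) ∘ x) + WithLp.toLp 2 ((starRingEnd ℂ) ∘ y) := by
              ext i; simp [PiLp.add_apply]
            simp only [hxy, hCadd]
          map_smul' := by
            intro a x
            show C (WithLp.toLp 2 ((starRingEnd ℂ) ∘ (a • x)))
              = (RingHom.id ℂ) a • C (WithLp.toLp 2 ((starRingEnd ℂ) ∘ x))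
            have hax : (WithLp.toLp 2 ((starRingEnd ℂ) ∘ (a • x)) :
                EuclideanSpace ℂ ((j : Fin d) × Fin (nn j)))
                = (starRingEnd ℂ) a • WithLp.toLp 2 ((starRingEnd ℂ) ∘ x) := by
              ext i; simp [PiLp.smul_apply, smul_eq_mul]
            rw [hax, hCsmul]
            simp }
      have hTnorm : ∀ x, ‖T x‖ = ‖x‖ := by
        intro x
        show ‖C (WithLp.toLp 2 ((starRingEnd ℂ) ∘ x))‖ = ‖x‖
        rw [hnorm]
        rw [EuclideanSpace.norm_eq, EuclideanSpace.norm_eq]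
        congr 1
        refine Finset.sum_congr rfl fun i _ => ?_
        simp
      let Tiso : EuclideanSpace ℂ ((j : Fin d) × Fin (nn j)) →ₗᵢ[ℂ]
          EuclideanSpace ℂ ((j : Fin d) × Fin (nn j)) := ⟨T, hTnorm⟩
      intro x y
      have hx : C x = Tiso (WithLp.toLp 2 ((starRingEnd ℂ) ∘ x)) := by
        show C x = C (WithLp.toLp 2 ((starRingEnd ℂ) ∘ (WithLp.toLp 2 ((starRingEnd ℂ) ∘ x))))
        have harg : (WithLp.toLp 2 ((starRingEnd ℂ) ∘ (WithLp.toLp 2 ((starRingEnd ℂ) ∘ x))) :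
            EuclideanSpace ℂ ((j : Fin d) × Fin (nn j))) = x := by
          ext i; exact Complex.conj_conj (x i)
        rw [harg]
      have hy : C y = Tiso (WithLp.toLp 2 ((starRingEnd ℂ) ∘ y)) := by
        show C y = C (WithLp.toLp 2 ((starRingEnd ℂ) ∘ (WithLp.toLp 2 ((starRingEnd ℂ) ∘ y))))
        have harg : (WithLp.toLp 2 ((starRingEnd ℂ) ∘ (WithLp.toLp 2 ((starRingEnd ℂ) ∘ y))) :
            EuclideanSpace ℂ ((j : Fin d) × Fin (nn j))) = y := by
          ext i; exact Complex.conj_conj (y i)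
        rw [harg]
      rw [hx, hy, Tiso.inner_map_map, PiLp.inner_apply, PiLp.inner_apply]
      refine Finset.sum_congr rfl fun i _ => ?_
      simp [RCLike.inner_apply, mul_comm]
    -- MH * M = 1
    have hMH : Mᴴ * M = 1 := by
      ext r s
      have h1 := hinner (e r) (e s)
      rw [PiLp.inner_apply, PiLp.inner_apply] at h1
      simp only [RCLike.inner_apply, hCe] at h1
      rw [Matrix.mul_apply]
      have h2 : ∀ q, Mᴴ r q * M q s = (starRingEnd ℂ) (M q r) * M q s :=
        fun q => rfl
      simp only [h2]
      rw [Finset.sum_congr rfl fun q _ => mul_comm ((starRingEnd ℂ) (M q r)) (M q s), h1,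
        Finset.sum_congr rfl fun q _ => mul_comm ((e r) q) ((starRingEnd ℂ) ((e s) q))]
      simp only [he_app, apply_ite (⇑(starRingEnd ℂ)), _root_.map_one,
        _root_.map_zero, ite_mul, one_mul, zero_mul]
      rw [Finset.sum_ite_eq' Finset.univ s (fun i => if i = r then (1:ℂ) else 0)]
      rw [Matrix.one_apply]
      by_cases hrs : r = s
      · simp [hrs]
      · simp [hrs, Ne.symm hrs]
    -- diag relation
    set D : Matrix ((j : Fin d) × Fin (nn j)) ((j : Fin d) × Fin (nn j)) ℂ :=
      Matrix.diagonal (fun p => (starRingEnd ℂ) (ξ p.1)) with hD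
    have hMD : M * D * M.map (starRingEnd ℂ) = D := by
      ext p r
      have h1 := congrFun (h (e r)) p
      rw [hrepr (WithLp.toLp 2 (U.mulVec (C (e r)))) p] at h1
      have h2 : ∀ q, (U.mulVec (C (e r))) q = ξ q.1 * M q r := by
        intro q
        rw [hU, Matrix.mulVec_diagonal, hCe]
      have h3 : (Uᴴ.mulVec (e r)) p = (starRingEnd ℂ) (ξ p.1) * e r p := by
        rw [hU, Matrix.diagonal_conjTranspose, Matrix.mulVec_diagonal]
        rfl
      simp only [h2, _root_.map_mul] at h1
      rw [h3, he_app] at h1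
      rw [Matrix.mul_apply]
      simp only [Matrix.map_apply, hD, Matrix.mul_diagonal]
      rw [Finset.sum_congr rfl (fun q _ => by ring : ∀ q ∈ Finset.univ,
        M p q * (starRingEnd ℂ) (ξ q.1) * (starRingEnd ℂ) (M q r)
          = M p q * ((starRingEnd ℂ) (ξ q.1) * (starRingEnd ℂ) (M q r)))]
      rw [h1, Matrix.diagonal_apply]
      by_cases hpr : p = r
      · simp [hpr]
      · simp [hpr]
    have hMbarM : M.map (starRingEnd ℂ) * M = 1 := mul_eq_one_comm.mp hM1
    have hMMH : M * Mᴴ = 1 := mul_eq_one_comm.mp hMH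
    have hMbar_eq : M.map (starRingEnd ℂ) = Mᴴ := by
      calc M.map (starRingEnd ℂ) = M.map (starRingEnd ℂ) * (M * Mᴴ) := by
            rw [hMMH, Matrix.mul_one]
        _ = (M.map (starRingEnd ℂ) * M) * Mᴴ := by rw [Matrix.mul_assoc]
        _ = Mᴴ := by rw [hMbarM, Matrix.one_mul]
    have hsymm : ∀ p q, M p q = M q p := by
      intro p q
      have h1 := congrFun (congrFun hMbar_eq q) p
      simp only [Matrix.map_apply, Matrix.conjTranspose_apply] at h1
      exact ((starRingEnd ℂ).injective h1).symm
    have hcomm : M * D = D * M := by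
      calc M * D = M * D * (M.map (starRingEnd ℂ) * M) := by
            rw [hMbarM, Matrix.mul_one]
        _ = (M * D * M.map (starRingEnd ℂ)) * M := by
            rw [Matrix.mul_assoc (M * D)]
        _ = D * M := by rw [hMD]
    have hblock : ∀ p q : (j : Fin d) × Fin (nn j), p.1 ≠ q.1 → M p q = 0 := by
      intro p q hpq
      have h1 := congrFun (congrFun hcomm p) q
      rw [Matrix.mul_diagonal, Matrix.diagonal_mul] at h1
      by_contra hne
      have h2 : (starRingEnd ℂ) (ξ q.1) * M p q = (starRingEnd ℂ) (ξ p.1) * M p q := by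
        rw [mul_comm] at h1
        rw [h1]
      exact hpq (hdist ((starRingEnd ℂ).injective (mul_right_cancel₀ hne h2))).symm
    refine ⟨fun j => Matrix.of fun a b => M ⟨j, a⟩ ⟨j, b⟩, ?_, ?_, ?_⟩
    · intro j
      rw [Matrix.mem_unitaryGroup_iff]
      ext a b
      rw [Matrix.mul_apply]
      have h1 := congrFun (congrFun hMMH ⟨j, a⟩) ⟨j, b⟩
      rw [Matrix.mul_apply, hsum] at h1
      rw [Finset.sum_eq_single_of_mem j (Finset.mem_univ j) ?side] at h1
      · have h2 : ∀ k : Fin (nn j),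
            M ⟨j, a⟩ ⟨j, k⟩ * Mᴴ ⟨j, k⟩ ⟨j, b⟩
              = (Matrix.of fun a b => M ⟨j, a⟩ ⟨j, b⟩) a k
                * (star (Matrix.of fun a b => M ⟨j, a⟩ ⟨j, b⟩)) k b := by
          intro k
          rw [Matrix.conjTranspose_apply, Matrix.star_apply]
          rfl
        simp only [h2] at h1
        rw [h1, Matrix.one_apply, Matrix.one_apply]
        simp [Sigma.mk.inj_iff]
      · intro j' _ hj'
        apply Finset.sum_eq_zero
        intro k _
        rw [hblock ⟨j, a⟩ ⟨j', k⟩ (by simpa using (Ne.symm hj')), zero_mul]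
    · intro j
      ext a b
      rw [Matrix.transpose_apply]
      exact hsymm ⟨j, b⟩ ⟨j, a⟩
    · intro x p
      rw [hrepr x p, hsum]
      rw [Finset.sum_eq_single_of_mem p.1 (Finset.mem_univ p.1) ?side2]
      · refine Finset.sum_congr rfl fun k _ => ?_
        congr 1
      · intro j' _ hj'
        apply Finset.sum_eq_zero
        intro k _
        rw [hblock p ⟨j', k⟩ (Ne.symm hj'), zero_mul]
  · -- reverse direction
    rintro ⟨V, hVu, hVs, hrep⟩ x
    ext p
    have h1 : C (WithLp.toLp 2 (U.mulVec (C x))) p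
        = ∑ k, V p.1 p.2 k * (starRingEnd ℂ) ((WithLp.toLp 2 (U.mulVec (C x))) ⟨p.1, k⟩) :=
      hrep _ p
    have h2 : ∀ k : Fin (nn p.1), (WithLp.toLp 2 (U.mulVec (C x))) ⟨p.1, k⟩
        = ξ p.1 * (C x) ⟨p.1, k⟩ := by
      intro k
      rw [WithLp.ofLp_toLp, hU, Matrix.mulVec_diagonal]
    have h3 : (Uᴴ.mulVec x) p = (starRingEnd ℂ) (ξ p.1) * x p := by
      rw [hU, Matrix.diagonal_conjTranspose, Matrix.mulVec_diagonal]
      rfl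
    rw [h1, h3]
    have h4 : ∑ k, V p.1 p.2 k * (starRingEnd ℂ) ((WithLp.toLp 2 (U.mulVec (C x))) ⟨p.1, k⟩)
        = (starRingEnd ℂ) (ξ p.1)
          * ∑ k, V p.1 p.2 k * (starRingEnd ℂ) ((C x) ⟨p.1, k⟩) := by
      rw [Finset.mul_sum]
      refine Finset.sum_congr rfl fun k _ => ?_
      rw [h2, _root_.map_mul]
      ring
    rw [h4, ← hrep (C x) p, hinv]
end

section
/- Let J be the conjugation J f = conj(f) on L²(m) of the unit circle and M_ξ the bilateral shift. If C is a conjugation on L²(m) with C M_ξ C = M_ξ*, then A := C ∘ J is a unitary operator on L²(m) commuting with M_ξ, hence A = M_u for some u ∈ L^∞(m) unimodular a.e., and therefore C = M_u ∘ J with u unimodular a.e. -/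
open MeasureTheory

instance : Fact (0 < 2 * Real.pi) := ⟨by positivity⟩

/-- Normalized Lebesgue (Haar) measure on the circle, modeled as `AddCircle (2π)`. -/
noncomputable def circleMeasure : Measure (AddCircle (2 * Real.pi)) :=
  AddCircle.haarAddCircle

instance : IsProbabilityMeasure circleMeasure := by
  unfold circleMeasure; infer_instance

open Filter Topology
open scoped ENNReal NNReal

theorem every_symmetric_conjugation_for_bilateral_shift_is_MuJ
    (J : Lp ℂ 2 circleMeasure → Lp ℂ 2 circleMeasure)
    (hJdef : ∀ f : Lp ℂ 2 circleMeasure,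
      (J f : AddCircle (2 * Real.pi) → ℂ) =ᵐ[circleMeasure]
        fun t => (starRingEnd ℂ) (f t))
    (Mξ : Lp ℂ 2 circleMeasure → Lp ℂ 2 circleMeasure)
    (hMξdef : ∀ f : Lp ℂ 2 circleMeasure,
      (Mξ f : AddCircle (2 * Real.pi) → ℂ) =ᵐ[circleMeasure]
        fun t => (fourier 1 t : ℂ) * f t)
    (C : Lp ℂ 2 circleMeasure → Lp ℂ 2 circleMeasure) (hC : IsConjugation C)
    (hsym : ∀ f : Lp ℂ 2 circleMeasure,
      (C (Mξ (C f)) : AddCircle (2 * Real.pi) → ℂ) =ᵐ[circleMeasure]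
        fun t => (starRingEnd ℂ) (fourier 1 t : ℂ) * f t) :
    ∃ u : AddCircle (2 * Real.pi) → ℂ,
      AEStronglyMeasurable u circleMeasure ∧
      (∀ᵐ t ∂circleMeasure, ‖u t‖ = 1) ∧
      (∀ f : Lp ℂ 2 circleMeasure,
        (C (J f) : AddCircle (2 * Real.pi) → ℂ) =ᵐ[circleMeasure]
          fun t => u t * f t) ∧
      (∀ f : Lp ℂ 2 circleMeasure,
        (C f : AddCircle (2 * Real.pi) → ℂ) =ᵐ[circleMeasure]
          fun t => u t * (starRingEnd ℂ) (f t)) := by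
  classical
  obtain ⟨hCadd, hCnorm, hCinv⟩ := hC
  -- basic algebra of C
  have hC0 : C 0 = 0 := by
    have h := hCadd 0 0 1
    simp only [one_smul, add_zero, map_one] at h
    exact (left_eq_add.mp h)
  -- basic properties of J
  have hJadd : ∀ x y, J (x + y) = J x + J y := by
    intro x y
    apply Lp.ext
    filter_upwards [hJdef (x + y), hJdef x, hJdef y, Lp.coeFn_add x y,
      Lp.coeFn_add (J x) (J y)] with t h1 h2 h3 h4 h5
    simp only [h1, h4, Pi.add_apply, map_add, h5, h2, h3]
  have hJsmul : ∀ (a : ℂ) x, J (a • x) = (starRingEnd ℂ) a • J x := by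
    intro a x
    apply Lp.ext
    filter_upwards [hJdef (a • x), hJdef x, Lp.coeFn_smul a x,
      Lp.coeFn_smul ((starRingEnd ℂ) a) (J x)] with t h1 h2 h3 h4
    simp only [h1, h3, Pi.smul_apply, smul_eq_mul, map_mul, h4, h2]
  have hJJ : ∀ f, J (J f) = f := by
    intro f
    apply Lp.ext
    filter_upwards [hJdef (J f), hJdef f] with t h1 h2
    simp [h1, h2]
  have hJnorm : ∀ f, ‖J f‖ = ‖f‖ := by
    intro f
    rw [Lp.norm_def, Lp.norm_def]
    congr 1
    rw [eLpNorm_congr_ae (hJdef f)]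
    exact eLpNorm_congr_norm_ae (Eventually.of_forall fun t => by simp)
  -- the unitary A = C ∘ J
  set A : Lp ℂ 2 circleMeasure → Lp ℂ 2 circleMeasure := fun f => C (J f) with hAdef
  have hAeq : ∀ f, A f = C (J f) := fun f => rfl
  have hAadd : ∀ x y, A (x + y) = A x + A y := by
    intro x y
    have h := hCadd (J x) (J y) 1
    simp only [one_smul, map_one] at h
    simp only [hAeq, hJadd, h]
  have hAsmul : ∀ (a : ℂ) x, A (a • x) = a • A x := by
    intro a x
    have h := hCadd 0 (J x) ((starRingEnd ℂ) a)
    simp only [zero_add, hC0, Complex.conj_conj] at h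
    simp only [hAeq, hJsmul, h]
  have hAnorm : ∀ f, ‖A f‖ = ‖f‖ := by
    intro f
    rw [hAeq]
    exact (hCnorm (J f)).trans (hJnorm f)
  let Alin : Lp ℂ 2 circleMeasure →ₗᵢ[ℂ] Lp ℂ 2 circleMeasure :=
    ⟨{ toFun := A, map_add' := hAadd, map_smul' := hAsmul }, hAnorm⟩
  -- C intertwines Mξ with multiplication by conj ξ
  have hCM : ∀ g, (C (Mξ g) : AddCircle (2 * Real.pi) → ℂ) =ᵐ[circleMeasure]
      fun t => (starRingEnd ℂ) (fourier 1 t : ℂ) * (C g) t := by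
    intro g
    have h := hsym (C g)
    rwa [hCinv g] at h
  -- Mξ (J (Mξ f)) = J f
  have hMJM : ∀ f, Mξ (J (Mξ f)) = J f := by
    intro f
    apply Lp.ext
    filter_upwards [hMξdef (J (Mξ f)), hJdef (Mξ f), hMξdef f, hJdef f] with t h1 h2 h3 h4
    rw [h1, h2, h3, h4, map_mul, ← mul_assoc, Complex.mul_conj]
    norm_cast
    simp
  -- A commutes with Mξ
  have hAM : ∀ f, (A (Mξ f) : AddCircle (2 * Real.pi) → ℂ) =ᵐ[circleMeasure]
      fun t => (fourier 1 t : ℂ) * (A f) t := by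
    intro f
    have h1 : (A f : AddCircle (2 * Real.pi) → ℂ) =ᵐ[circleMeasure]
        fun t => (starRingEnd ℂ) (fourier 1 t : ℂ) * (A (Mξ f)) t := by
      have heq : A f = C (Mξ (J (Mξ f))) := by rw [hAeq, hMJM]
      rw [heq]
      exact hCM (J (Mξ f))
    filter_upwards [h1] with t h1t
    rw [h1t, ← mul_assoc, Complex.mul_conj]
    norm_cast
    simp
  -- the Fourier basis elements
  set e : ℤ → Lp ℂ 2 circleMeasure := fun n => fourierLp 2 n with hedef
  have he : ∀ n, (e n : AddCircle (2 * Real.pi) → ℂ) =ᵐ[circleMeasure] fourier n :=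
    fun n => coeFn_fourierLp 2 n
  have hMe : ∀ n : ℤ, Mξ (e n) = e (n + 1) := by
    intro n
    apply Lp.ext
    filter_upwards [hMξdef (e n), he n, he (n + 1)] with t h1 h2 h3
    rw [h1, h2, h3, add_comm n 1, fourier_add]
  -- the symbol u
  set u : AddCircle (2 * Real.pi) → ℂ := (A (e 0) : AddCircle (2 * Real.pi) → ℂ) with hudef
  have hAe : ∀ n : ℤ, (A (e n) : AddCircle (2 * Real.pi) → ℂ) =ᵐ[circleMeasure]
      fun t => (fourier n t : ℂ) * u t := by
    intro n
    induction n using Int.induction_on with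
    | zero => filter_upwards with t; simp [fourier_zero, hudef]
    | succ n ih =>
      rw [← hMe n]
      filter_upwards [hAM (e n), ih] with t h1 h2
      rw [h1, h2, ← mul_assoc, ← fourier_add, add_comm 1 (n : ℤ)]
    | pred n ih =>
      have key := hAM (e (-(n : ℤ) - 1))
      rw [hMe (-(n : ℤ) - 1), show (-(n : ℤ) - 1 + 1) = -(n : ℤ) by ring] at key
      filter_upwards [key, ih] with t h1 h2
      have hne : (fourier 1 t : ℂ) ≠ 0 := by
        intro h
        have hn1 : ‖(fourier 1 t : ℂ)‖ = 1 := by simp [Circle.norm_coe]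
        rw [h] at hn1; simp at hn1
      apply mul_left_cancel₀ hne
      rw [← h1, h2, ← mul_assoc, ← fourier_add,
        show (1 : ℤ) + (-(n : ℤ) - 1) = -(n : ℤ) by ring]
  -- coe of finite sums
  have coeFn_sum_smul : ∀ (s : Finset ℤ) (c : ℤ → ℂ) (g : ℤ → Lp ℂ 2 circleMeasure),
      ((∑ i ∈ s, c i • g i : Lp ℂ 2 circleMeasure) : AddCircle (2 * Real.pi) → ℂ)
        =ᵐ[circleMeasure] fun t => ∑ i ∈ s, c i * g i t := by
    intro s c g
    induction s using Finset.induction_on with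
    | empty => simp only [Finset.sum_empty]; exact Lp.coeFn_zero (E := ℂ) (p := 2) (μ := circleMeasure)
    | insert a s ha ih =>
      rw [Finset.sum_insert ha]
      filter_upwards [Lp.coeFn_add (c a • g a) (∑ i ∈ s, c i • g i),
        Lp.coeFn_smul (c a) (g a), ih] with t h1 h2 h3
      rw [Finset.sum_insert ha, h1, Pi.add_apply, h2, h3, Pi.smul_apply, smul_eq_mul]
  -- main step: A is multiplication by u
  have hmain : ∀ f : Lp ℂ 2 circleMeasure,
      (A f : AddCircle (2 * Real.pi) → ℂ) =ᵐ[circleMeasure] fun t => u t * f t := by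
    intro f
    have hsum : HasSum (fun i => fourierCoeff (⇑f) i • e i) f := hasSum_fourier_series_L2 f
    set c : ℤ → ℂ := fun i => fourierCoeff (⇑f) i with hcdef
    set S : ℕ → Finset ℤ := fun k => Finset.Icc (-(k : ℤ)) k with hSdef
    have hSmono : Monotone S := fun a b hab =>
      Finset.Icc_subset_Icc (by exact_mod_cast neg_le_neg (Int.ofNat_le.mpr hab))
        (by exact_mod_cast hab)
    have hStend : Tendsto S atTop atTop :=
      tendsto_atTop_finset_of_monotone hSmono
        (fun i => ⟨i.natAbs, by simp only [hSdef, Finset.mem_Icc]; omega⟩)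
    set P : ℕ → Lp ℂ 2 circleMeasure := fun k => ∑ i ∈ S k, c i • e i with hPdef
    have hPf : Tendsto P atTop (𝓝 f) := hsum.comp hStend
    have hAcont : Continuous A := Alin.continuous
    have hAPf : Tendsto (fun k => A (P k)) atTop (𝓝 (A f)) :=
      (hAcont.tendsto f).comp hPf
    have hAP : ∀ k, (A (P k) : AddCircle (2 * Real.pi) → ℂ) =ᵐ[circleMeasure]
        fun t => u t * (P k) t := by
      intro k
      have hA_Pk : A (P k) = ∑ i ∈ S k, c i • A (e i) := by
        have h1 : A (P k) = Alin (P k) := rfl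
        rw [h1, hPdef, map_sum Alin (fun i => c i • e i) (S k)]
        exact Finset.sum_congr rfl fun i _ => Alin.map_smul (c i) (e i)
      rw [hA_Pk]
      filter_upwards [coeFn_sum_smul (S k) c (fun i => A (e i)),
        coeFn_sum_smul (S k) c e, ae_all_iff.mpr hAe, ae_all_iff.mpr he] with t h1 h2 h3 h4
      rw [h1, h2]
      rw [Finset.mul_sum]
      refine Finset.sum_congr rfl fun i _ => ?_
      rw [h3 i, h4 i]
      ring
    have htm1 : TendstoInMeasure circleMeasure (fun k => (P k : AddCircle (2 * Real.pi) → ℂ))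
        atTop ⇑f := tendstoInMeasure_of_tendsto_Lp hPf
    have htm2 : TendstoInMeasure circleMeasure
        (fun k => (A (P k) : AddCircle (2 * Real.pi) → ℂ)) atTop ⇑(A f) :=
      tendstoInMeasure_of_tendsto_Lp hAPf
    obtain ⟨ns, hns_mono, hns⟩ := htm1.exists_seq_tendsto_ae
    have htm2' : TendstoInMeasure circleMeasure
        (fun j => (A (P (ns j)) : AddCircle (2 * Real.pi) → ℂ)) atTop ⇑(A f) :=
      fun ε hε => (htm2 ε hε).comp hns_mono.tendsto_atTop
    obtain ⟨ms, hms_mono, hms⟩ := htm2'.exists_seq_tendsto_ae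
    filter_upwards [hns, hms, ae_all_iff.mpr hAP] with t h1 h2 h3
    have h1' : Tendsto (fun j => (P (ns (ms j)) : AddCircle (2 * Real.pi) → ℂ) t)
        atTop (𝓝 (f t)) := h1.comp hms_mono.tendsto_atTop
    have h4 : Tendsto (fun j => u t * (P (ns (ms j)) : AddCircle (2 * Real.pi) → ℂ) t)
        atTop (𝓝 (u t * f t)) := h1'.const_mul (u t)
    have h5 : Tendsto (fun j => (A (P (ns (ms j))) : AddCircle (2 * Real.pi) → ℂ) t)
        atTop (𝓝 (u t * f t)) := by
      have heq : (fun j => (A (P (ns (ms j))) : AddCircle (2 * Real.pi) → ℂ) t)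
          = fun j => u t * (P (ns (ms j)) : AddCircle (2 * Real.pi) → ℂ) t :=
        funext fun j => h3 _
      rw [heq]; exact h4
    exact tendsto_nhds_unique h2 h5
  -- norm preservation in eLpNorm form
  have hA_eLp : ∀ g : Lp ℂ 2 circleMeasure,
      eLpNorm (fun t => u t * g t) 2 circleMeasure = eLpNorm (⇑g) 2 circleMeasure := by
    intro g
    rw [← eLpNorm_congr_ae (hmain g)]
    have h1 := hAnorm g
    rw [Lp.norm_def, Lp.norm_def] at h1
    exact (ENNReal.toReal_eq_toReal_iff' (Lp.eLpNorm_ne_top _) (Lp.eLpNorm_ne_top _)).mp h1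
  -- the key integral identity
  have key : ∀ E : Set (AddCircle (2 * Real.pi)), MeasurableSet E →
      (∫⁻ t in E, (‖u t‖₊ : ℝ≥0∞) ^ (2 : ℝ) ∂circleMeasure) = circleMeasure E := by
    intro E hE
    have hμE : circleMeasure E ≠ ⊤ := measure_ne_top _ _
    set g := indicatorConstLp 2 hE hμE (1 : ℂ) with hgdef
    have hgc : ⇑g =ᵐ[circleMeasure] E.indicator fun _ => (1 : ℂ) := indicatorConstLp_coeFn
    have h := hA_eLp g
    have h1 : (fun t => u t * g t) =ᵐ[circleMeasure]
        fun t => u t * E.indicator (fun _ => (1 : ℂ)) t := by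
      filter_upwards [hgc] with t ht; rw [ht]
    rw [eLpNorm_congr_ae h1, eLpNorm_congr_ae hgc,
      eLpNorm_eq_lintegral_rpow_enorm_toReal two_ne_zero ENNReal.ofNat_ne_top,
      eLpNorm_eq_lintegral_rpow_enorm_toReal two_ne_zero ENNReal.ofNat_ne_top,
      ENNReal.toReal_ofNat] at h
    simp only [enorm_eq_nnnorm] at h
    have hL : (∫⁻ t, (‖u t * E.indicator (fun _ => (1 : ℂ)) t‖₊ : ℝ≥0∞) ^ (2 : ℝ) ∂circleMeasure)
        = ∫⁻ t in E, (‖u t‖₊ : ℝ≥0∞) ^ (2 : ℝ) ∂circleMeasure := by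
      rw [← lintegral_indicator hE]
      congr 1
      funext t
      by_cases ht : t ∈ E
      · simp [Set.indicator_of_mem ht]
      · simp [Set.indicator_of_notMem ht]
    have hR : (∫⁻ t, (‖E.indicator (fun _ => (1 : ℂ)) t‖₊ : ℝ≥0∞) ^ (2 : ℝ) ∂circleMeasure)
        = circleMeasure E := by
      rw [← setLIntegral_one E, ← lintegral_indicator hE]
      congr 1
      funext t
      by_cases ht : t ∈ E
      · simp [Set.indicator_of_mem ht]
      · simp [Set.indicator_of_notMem ht]
    rw [hL, hR] at h
    have h2 := congrArg (fun x : ℝ≥0∞ => x ^ (2 : ℝ)) h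
    have h12 : (1 : ℝ) / 2 * 2 = 1 := by norm_num
    simp only [← ENNReal.rpow_mul, h12, ENNReal.rpow_one] at h2
    exact h2
  have hum : StronglyMeasurable u := Lp.stronglyMeasurable _
  -- upper bound
  have hub : ∀ n : ℕ, ∀ᵐ t ∂circleMeasure, ‖u t‖ < 1 + 1 / ((n : ℝ) + 1) := by
    intro n
    set a : ℝ := 1 + 1 / ((n : ℝ) + 1) with hadef
    have ha1 : 1 < a := by
      have : 0 < 1 / ((n : ℝ) + 1) := by positivity
      rw [hadef]; linarith
    have ha0 : 0 ≤ a := by linarith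
    set E := {t | a ≤ ‖u t‖} with hEdef
    have hEmeas : MeasurableSet E := measurableSet_le measurable_const hum.measurable.norm
    have hkey := key E hEmeas
    have hlow : ENNReal.ofReal a ^ (2 : ℝ) * circleMeasure E
        ≤ ∫⁻ t in E, (‖u t‖₊ : ℝ≥0∞) ^ (2 : ℝ) ∂circleMeasure := by
      rw [← setLIntegral_const E]
      refine setLIntegral_mono' hEmeas fun t ht => ?_
      have h1 : ENNReal.ofReal a ≤ (‖u t‖₊ : ℝ≥0∞) := by
        rw [← enorm_eq_nnnorm, ← ofReal_norm]
        exact ENNReal.ofReal_le_ofReal ht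
      exact ENNReal.rpow_le_rpow h1 (by norm_num)
    rw [hkey] at hlow
    have hE0 : circleMeasure E = 0 := by
      by_contra h0
      have hlt : (1 : ℝ≥0∞) * circleMeasure E < ENNReal.ofReal a ^ (2 : ℝ) * circleMeasure E := by
        rw [ENNReal.mul_lt_mul_iff_left h0 (measure_ne_top _ _)]
        calc (1 : ℝ≥0∞) = 1 ^ (2 : ℝ) := by rw [ENNReal.one_rpow]
        _ < ENNReal.ofReal a ^ (2 : ℝ) := by
            apply ENNReal.rpow_lt_rpow _ (by norm_num)
            rwa [← ENNReal.ofReal_one, ENNReal.ofReal_lt_ofReal_iff (by linarith)]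
      rw [one_mul] at hlt
      exact absurd (lt_of_lt_of_le hlt hlow) (lt_irrefl _)
    have : ∀ᵐ t ∂circleMeasure, t ∉ E := by
      rw [ae_iff]
      simpa [hEdef] using hE0
    filter_upwards [this] with t ht
    rw [hEdef] at ht
    simpa [not_le] using ht
  -- lower bound
  have hlb : ∀ n : ℕ, ∀ᵐ t ∂circleMeasure, 1 - 1 / ((n : ℝ) + 1) < ‖u t‖ := by
    intro n
    set b : ℝ := 1 - 1 / ((n : ℝ) + 1) with hbdef
    have hb1 : b < 1 := by
      rw [hbdef]
      have : 0 < 1 / ((n : ℝ) + 1) := by positivity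
      linarith
    have hb0 : 0 ≤ b := by
      rw [hbdef]
      have h1 : 1 / ((n : ℝ) + 1) ≤ 1 := by
        rw [div_le_one (by positivity)]; linarith [Nat.cast_nonneg (α := ℝ) n]
      linarith
    set F := {t | ‖u t‖ ≤ b} with hFdef
    have hFmeas : MeasurableSet F := measurableSet_le hum.measurable.norm measurable_const
    have hkey := key F hFmeas
    have hhigh : (∫⁻ t in F, (‖u t‖₊ : ℝ≥0∞) ^ (2 : ℝ) ∂circleMeasure)
        ≤ ENNReal.ofReal b ^ (2 : ℝ) * circleMeasure F := by
      rw [← setLIntegral_const F]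
      refine setLIntegral_mono' hFmeas fun t ht => ?_
      have h1 : (‖u t‖₊ : ℝ≥0∞) ≤ ENNReal.ofReal b := by
        rw [← enorm_eq_nnnorm, ← ofReal_norm]
        exact ENNReal.ofReal_le_ofReal ht
      exact ENNReal.rpow_le_rpow h1 (by norm_num)
    rw [hkey] at hhigh
    have hF0 : circleMeasure F = 0 := by
      by_contra h0
      have hlt : ENNReal.ofReal b ^ (2 : ℝ) * circleMeasure F < (1 : ℝ≥0∞) * circleMeasure F := by
        rw [ENNReal.mul_lt_mul_iff_left h0 (measure_ne_top _ _)]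
        calc ENNReal.ofReal b ^ (2 : ℝ) < 1 ^ (2 : ℝ) := by
              apply ENNReal.rpow_lt_rpow _ (by norm_num)
              rwa [← ENNReal.ofReal_one, ENNReal.ofReal_lt_ofReal_iff one_pos]
        _ = 1 := ENNReal.one_rpow _
      rw [one_mul] at hlt
      exact absurd hhigh (not_le.mpr hlt)
    have : ∀ᵐ t ∂circleMeasure, t ∉ F := by
      rw [ae_iff]
      simpa [hFdef] using hF0
    filter_upwards [this] with t ht
    rw [hFdef] at ht
    simpa [not_le] using ht
  -- unimodularity
  have hnorm1 : ∀ᵐ t ∂circleMeasure, ‖u t‖ = 1 := by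
    filter_upwards [ae_all_iff.mpr hub, ae_all_iff.mpr hlb] with t h1 h2
    refine le_antisymm ?_ ?_
    · by_contra h
      push_neg at h
      obtain ⟨n, hn⟩ := exists_nat_one_div_lt (by linarith : (0 : ℝ) < ‖u t‖ - 1)
      exact absurd (h1 n) (by push_neg; linarith)
    · by_contra h
      push_neg at h
      obtain ⟨n, hn⟩ := exists_nat_one_div_lt (by linarith : (0 : ℝ) < 1 - ‖u t‖)
      exact absurd (h2 n) (by push_neg; linarith)
  refine ⟨u, hum.aestronglyMeasurable, hnorm1, fun f => hmain f, fun f => ?_⟩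
  have hCfA : A (J f) = C f := by rw [hAeq, hJJ]
  rw [← hCfA]
  filter_upwards [hmain (J f), hJdef f] with t h1 h2
  rw [h1, h2]
end
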